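/- arXiv:2101.04962 — 2 statements merged into one kernel-verified Lean document; each statement's English description precedes it below -/
import Mathlib

section
/- Let W be a unitary matrix on ℂ^n ⊗ ℂ^m, let (W_ψ) be a family of unitary n×n matrices indexed by the unit vectors ψ ∈ ℂ^m, and let J be a state space symmetry of the density matrices on ℂ^m, such that for all unit vectors φ ∈ ℂ^n and ψ ∈ ℂ^m: W (|φ⟩⟨φ| ⊗ |ψ⟩⟨ψ|) W† = (W_ψᵀ |φ⟩⟨φ| \overline{W_ψ}) ⊗ J(|ψ⟩⟨ψ|), where \overline{W_ψ} = (W_ψᵀ)† is the entrywise conjugate. Then the conjugation by W_ψᵀ is independent of ψ: for all unit vectors ψ, ψ' ∈ ℂ^m and every unit vector φ ∈ ℂ^n, W_ψᵀ |φ⟩⟨φ| \overline{W_ψ} = W_{ψ'}ᵀ |φ⟩⟨φ| \overline{W_{ψ'}}. -/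
open scoped ComplexOrder Kronecker
open Matrix

noncomputable section

/-- The space of linear maps from `m × m` complex matrices to `n × n` complex matrices. -/
abbrev MatMap (m n : ℕ) := Matrix (Fin m) (Fin m) ℂ →ₗ[ℂ] Matrix (Fin n) (Fin n) ℂ

/-- The Choi matrix `Choi(Q) = Σ_{i,j} Q(E_{ij}) ⊗ E_{ij}` of a linear map between
matrix spaces. -/
def choi {m n : ℕ} (Q : MatMap m n) : Matrix (Fin n × Fin m) (Fin n × Fin m) ℂ :=
  Matrix.of fun p q => Q (Matrix.single p.2 q.2 1) p.1 q.1

/-- A linear map is completely positive if its Choi matrix is positive semidefinite. -/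
def IsCP {m n : ℕ} (Q : MatMap m n) : Prop := (choi Q).PosSemidef

/-- A quantum operation: a completely positive trace-non-increasing linear map. -/
def IsQOp {m n : ℕ} (Q : MatMap m n) : Prop :=
  IsCP Q ∧ ∀ ρ : Matrix (Fin m) (Fin m) ℂ, ρ.PosSemidef → (Q ρ).trace ≤ ρ.trace

/-- A quantum channel: a completely positive trace-preserving linear map. -/
def IsChannel {m n : ℕ} (Q : MatMap m n) : Prop :=
  IsCP Q ∧ ∀ ρ : Matrix (Fin m) (Fin m) ℂ, (Q ρ).trace = ρ.trace

/-- A density matrix: positive semidefinite with unit trace. -/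
def IsDensity {ι : Type*} [Fintype ι] (ρ : Matrix ι ι ℂ) : Prop :=
  ρ.PosSemidef ∧ ρ.trace = 1

/-- A rank-one orthogonal projection `|ψ⟩⟨ψ|` for a unit vector `ψ`. -/
def IsRankOneProj {d : ℕ} (P : Matrix (Fin d) (Fin d) ℂ) : Prop :=
  ∃ ψ : Fin d → ℂ, star ψ ⬝ᵥ ψ = 1 ∧ P = Matrix.vecMulVec ψ (star ψ)

/-- A state space symmetry: a bijection between the sets of density matrices that
preserves convex combinations. -/
def IsStateSymmetry {ι κ : Type*} [Fintype ι] [Fintype κ]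
    (S : Matrix ι ι ℂ → Matrix κ κ ℂ) : Prop :=
  Set.BijOn S {ρ | IsDensity ρ} {ρ | IsDensity ρ} ∧
  ∀ ρ σ : Matrix ι ι ℂ, IsDensity ρ → IsDensity σ → ∀ p : ℝ, 0 ≤ p → p ≤ 1 →
    S ((p : ℂ) • ρ + ((1 - p : ℝ) : ℂ) • σ) = (p : ℂ) • S ρ + ((1 - p : ℝ) : ℂ) • S σ

/-- An operation space symmetry: a bijection between the sets of quantum operations that
preserves convex combinations and maps the zero map to the zero map. -/
def IsOpSymmetry {m n m' n' : ℕ} (S : MatMap m n → MatMap m' n') : Prop :=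
  Set.BijOn S {Q | IsQOp Q} {Q | IsQOp Q} ∧
  (∀ Q R : MatMap m n, IsQOp Q → IsQOp R → ∀ p : ℝ, 0 ≤ p → p ≤ 1 →
    S ((p : ℂ) • Q + ((1 - p : ℝ) : ℂ) • R) = (p : ℂ) • S Q + ((1 - p : ℝ) : ℂ) • S R) ∧
  S 0 = 0

/-- Transport of a square matrix along an equality of dimensions. -/
def castMat {m n : ℕ} (h : m = n) (A : Matrix (Fin m) (Fin m) ℂ) :
    Matrix (Fin n) (Fin n) ℂ :=
  Matrix.reindex (finCongr h) (finCongr h) A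

/-- The unitary channel `ρ ↦ U ρ U†` as a linear map. -/
def adjAction {d : ℕ} (U : Matrix (Fin d) (Fin d) ℂ) : MatMap d d where
  toFun ρ := U * ρ * Uᴴ
  map_add' x y := by simp [Matrix.mul_add, Matrix.add_mul]
  map_smul' c x := by simp [Matrix.mul_smul, Matrix.smul_mul]

/-- The Hilbert–Schmidt adjoint of a linear map between matrix spaces; it is the unique
linear map satisfying `Tr[A† Q(B)] = Tr[(Q†(A))† B]` for all `A`, `B`. -/
def hsAdjoint {m n : ℕ} (Q : MatMap m n) : MatMap n m where
  toFun A := Matrix.of fun i j => ((Q (Matrix.single i j 1))ᴴ * A).trace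
  map_add' A B := by
    ext i j
    simp [Matrix.mul_add, Matrix.trace_add]
  map_smul' c A := by
    ext i j
    simp [Matrix.mul_smul, Matrix.trace_smul]

open scoped Classical in
/-- The positive semidefinite square root (junk value `0` on non-psd inputs). -/
noncomputable def psqrt {d : ℕ} (M : Matrix (Fin d) (Fin d) ℂ) : Matrix (Fin d) (Fin d) ℂ :=
  if h : M.PosSemidef then
    (h.1.eigenvectorUnitary : Matrix (Fin d) (Fin d) ℂ) *
      Matrix.diagonal ((↑) ∘ (Real.sqrt ·) ∘ h.1.eigenvalues) *
      (star h.1.eigenvectorUnitary : Matrix (Fin d) (Fin d) ℂ) else 0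

/-- The fidelity `F(ρ,σ) = (Tr[√(√ρ σ √ρ)])²` of two density matrices. -/
noncomputable def fidelity {d : ℕ} (ρ σ : Matrix (Fin d) (Fin d) ℂ) : ℝ :=
  ((psqrt (psqrt ρ * σ * psqrt ρ)).trace.re) ^ 2

/-- The double transpose `ρ ↦ [Φ(ρᵀ)]ᵀ` of a linear map between matrix spaces. -/
def doubleTransposeMap {m n : ℕ} (Φ : MatMap m n) : MatMap m n where
  toFun ρ := (Φ ρᵀ)ᵀ
  map_add' x y := by simp
  map_smul' c x := by simp

/-- A time symmetric quantum operation: completely positive, with `Q†(I_n) ≤ I_m`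
and `Q(I_m/m) ≤ I_n/n` in the Loewner order. -/
def IsTSOp {m n : ℕ} (Q : MatMap m n) : Prop :=
  IsCP Q ∧ ((1 : Matrix (Fin m) (Fin m) ℂ) - hsAdjoint Q 1).PosSemidef ∧
    ((n : ℂ)⁻¹ • (1 : Matrix (Fin n) (Fin n) ℂ)
      - Q ((m : ℂ)⁻¹ • (1 : Matrix (Fin m) (Fin m) ℂ))).PosSemidef

/-!
Fix a unit vector `φ`. Comparing both sides of the hypothesis as rank-one matrices shows that
`W (φ ⊗ χ) = (W_χᵀ φ) ⊗ v_χ` for every unit vector `χ`, with `J(|χ⟩⟨χ|) = |v_χ⟩⟨v_χ|`.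
If `|ψ⟩⟨ψ| = |ψ'⟩⟨ψ'|` the claim follows by cancelling the common factor `J(|ψ⟩⟨ψ|)`.
Otherwise injectivity of `J` makes `v_ψ` and `v_ψ'` linearly independent, and then, by
linearity of `W`, `W_ψᵀ φ ⊗ v_ψ + W_ψ'ᵀ φ ⊗ v_ψ'` is a multiple of the product vector
`W (φ ⊗ χ)` for the normalised superposition `χ` of `ψ` and `ψ'`. A sum of two product vectors
with independent second factors is a product vector only if the first factors are parallel,
so `W_ψᵀ φ` and `W_ψ'ᵀ φ` differ by a phase.
-/

section VecKron

variable {R ι κ : Type*}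

def vecKron [Mul R] (u : ι → R) (v : κ → R) : ι × κ → R := fun p => u p.1 * v p.2

@[simp]
theorem vecKron_apply [Mul R] (u : ι → R) (v : κ → R) (p : ι × κ) :
    vecKron u v p = u p.1 * v p.2 := rfl

theorem star_vecKron [CommMonoid R] [StarMul R] (u : ι → R) (v : κ → R) :
    star (vecKron u v) = vecKron (star u) (star v) := by
  ext p
  simp

theorem vecKron_add_right [Mul R] [Add R] [LeftDistribClass R] (u : ι → R) (v v' : κ → R) :
    vecKron u (v + v') = vecKron u v + vecKron u v' := by
  ext p
  simp [mul_add]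

theorem vecKron_smul_right [CommMonoid R] (c : R) (u : ι → R) (v : κ → R) :
    vecKron u (c • v) = c • vecKron u v := by
  ext p
  simp [mul_left_comm]

theorem smul_vecKron [Monoid R] (c : R) (u : ι → R) (v : κ → R) :
    vecKron (c • u) v = c • vecKron u v := by
  ext p
  simp [mul_assoc]

theorem kronecker_vecMulVec [CommMonoid R] (a b : ι → R) (c d : κ → R) :
    vecMulVec a b ⊗ₖ vecMulVec c d = vecMulVec (vecKron a c) (vecKron b d) := by
  ext p q
  simp [vecMulVec_apply, mul_mul_mul_comm]

theorem kronecker_right_cancel₀ [MulZeroClass R] [IsRightCancelMulZero R]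
    {A A' : Matrix ι ι R} {B : Matrix κ κ R} (hB : B ≠ 0) (h : A ⊗ₖ B = A' ⊗ₖ B) : A = A' := by
  obtain ⟨k, l, hkl⟩ : ∃ k l, B k l ≠ 0 := by
    by_contra! hB0
    exact hB (Matrix.ext hB0)
  ext i j
  exact mul_right_cancel₀ hkl (congrFun₂ h (i, k) (j, l))

end VecKron

theorem mul_vecMulVec_mul_conjTranspose {R ι κ : Type*} [Fintype κ] [CommSemiring R]
    [StarRing R] (M : Matrix ι κ R) (x y : κ → R) :
    M * vecMulVec x (star y) * Mᴴ = vecMulVec (M *ᵥ x) (star (M *ᵥ y)) := by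
  rw [mul_vecMulVec, vecMulVec_mul, star_mulVec]

theorem ne_zero_of_star_dotProduct_self_eq_one {R ι : Type*} [Fintype ι] [Semiring R] [Star R]
    [Nontrivial R] {x : ι → R} (hx : star x ⬝ᵥ x = 1) : x ≠ 0 := by
  rintro rfl
  simp at hx

theorem star_mulVec_dotProduct_mulVec_of_mem_unitaryGroup {R ι : Type*} [CommRing R]
    [StarRing R] [Fintype ι] [DecidableEq ι] {U : Matrix ι ι R} (hU : U ∈ unitaryGroup ι R)
    (x : ι → R) : star (U *ᵥ x) ⬝ᵥ (U *ᵥ x) = star x ⬝ᵥ x := by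
  rw [star_mulVec, dotProduct_mulVec, vecMul_vecMul, ← star_eq_conjTranspose,
    mem_unitaryGroup_iff'.mp hU, vecMul_one]

theorem exists_star_smul_dotProduct_smul_eq_one {𝕜 ι : Type*} [RCLike 𝕜] [Fintype ι]
    {χ : ι → 𝕜} (hχ : χ ≠ 0) : ∃ s : 𝕜, star (s • χ) ⬝ᵥ (s • χ) = 1 := by
  obtain ⟨r, hr, hrχ⟩ := RCLike.pos_iff_exists_ofReal.mp (dotProduct_star_self_pos_iff.mpr hχ)
  refine ⟨((Real.sqrt r)⁻¹ : ℝ), ?_⟩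
  rw [star_smul, smul_dotProduct, dotProduct_smul, ← hrχ, smul_eq_mul, smul_eq_mul,
    RCLike.star_def, RCLike.conj_ofReal, ← RCLike.ofReal_mul, ← RCLike.ofReal_mul, ← mul_assoc,
    ← mul_inv, Real.mul_self_sqrt hr.le, inv_mul_cancel₀ hr.ne', RCLike.ofReal_one]

theorem isDensity_vecMulVec_self_star_iff {ι : Type*} [Fintype ι] {ψ : ι → ℂ} :
    IsDensity (vecMulVec ψ (star ψ)) ↔ star ψ ⬝ᵥ ψ = 1 := by
  rw [IsDensity, trace_vecMulVec, dotProduct_comm]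
  exact and_iff_right (posSemidef_vecMulVec_self_star ψ)

section RankOne

variable {K ι κ : Type*} [Field K]

theorem vecMulVec_self_star_eq_iff [StarRing K] {x y : ι → K} :
    vecMulVec x (star x) = vecMulVec y (star y) ↔ ∃ c : K, star c * c = 1 ∧ x = c • y := by
  constructor
  · intro h
    by_cases hy : y = 0
    · subst hy
      exact ⟨1, by simp, by simpa using h⟩
    obtain ⟨j, hj⟩ : ∃ j, y j ≠ 0 := Function.ne_iff.mp hy
    have hjj : x j * star (x j) = y j * star (y j) := congrFun₂ h j j
    have hxj : x j ≠ 0 := by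
      rintro h0
      simp only [h0, star_zero, mul_zero, zero_eq_mul, star_eq_zero, or_self] at hjj
      exact hj hjj
    have hsxj : star (x j) ≠ 0 := star_ne_zero.mpr hxj
    refine ⟨star (y j) / star (x j), ?_, funext fun i => ?_⟩
    · rw [star_div₀, star_star, star_star, div_mul_div_comm,
        div_eq_one_iff_eq (mul_ne_zero hxj hsxj)]
      exact hjj.symm
    · have hij : x i * star (x j) = y i * star (y j) := congrFun₂ h i j
      rw [Pi.smul_apply, smul_eq_mul, div_mul_eq_mul_div, eq_div_iff hsxj, hij, mul_comm]
  · rintro ⟨c, hc, rfl⟩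
    rw [star_smul, smul_vecMulVec, vecMulVec_smul, smul_smul, mul_comm, hc, one_smul]

theorem vecMulVec_self_star_eq_of_eq_smul [StarRing K] [Fintype ι] {x y : ι → K} {c : K}
    (hx : star x ⬝ᵥ x = 1) (hy : star y ⬝ᵥ y = 1) (h : x = c • y) :
    vecMulVec x (star x) = vecMulVec y (star y) := by
  refine vecMulVec_self_star_eq_iff.mpr ⟨c, ?_, h⟩
  rwa [h, star_smul, smul_dotProduct, dotProduct_smul, hy, smul_eq_mul, smul_eq_mul,
    mul_one] at hx

theorem exists_eq_vecKron_of_vecMulVec_eq_kronecker [StarRing K] {x : ι × κ → K} {u : ι → K}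
    {ρ : Matrix κ κ K} (hu : u ≠ 0) (h : vecMulVec x (star x) = vecMulVec u (star u) ⊗ₖ ρ) :
    ∃ v : κ → K, x = vecKron u v ∧ ρ = vecMulVec v (star v) := by
  obtain ⟨i, hi⟩ : ∃ i, u i ≠ 0 := Function.ne_iff.mp hu
  set w : κ → K := fun k => x (i, k) / u i
  have hρ : ρ = vecMulVec w (star w) := by
    ext k l
    have hkl : x (i, k) * star (x (i, l)) = u i * star (u i) * ρ k l :=
      congrFun₂ h (i, k) (i, l)
    have hsi : star (u i) ≠ 0 := star_ne_zero.mpr hi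
    simp only [w, vecMulVec_apply, Pi.star_apply, star_div₀]
    field_simp
    linear_combination -hkl
  rw [hρ, kronecker_vecMulVec, ← star_vecKron, vecMulVec_self_star_eq_iff] at h
  obtain ⟨c, hc, hx⟩ := h
  refine ⟨c • w, by rw [hx, vecKron_smul_right], ?_⟩
  rw [hρ]
  exact (vecMulVec_self_star_eq_iff.mpr ⟨c, hc, rfl⟩).symm

theorem exists_mulVec_vecKron_eq_vecKron [StarRing K] [Fintype ι] [Fintype κ]
    {W : Matrix (ι × κ) (ι × κ) K} {U : Matrix ι ι K} {φ : ι → K} {χ : κ → K}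
    {ρ : Matrix κ κ K} (hUφ : U *ᵥ φ ≠ 0)
    (h : W * (vecMulVec φ (star φ) ⊗ₖ vecMulVec χ (star χ)) * Wᴴ
      = (U * vecMulVec φ (star φ) * Uᴴ) ⊗ₖ ρ) :
    ∃ v : κ → K, W *ᵥ vecKron φ χ = vecKron (U *ᵥ φ) v ∧ ρ = vecMulVec v (star v) := by
  rw [kronecker_vecMulVec, ← star_vecKron, mul_vecMulVec_mul_conjTranspose,
    mul_vecMulVec_mul_conjTranspose] at h
  exact exists_eq_vecKron_of_vecMulVec_eq_kronecker hUφ h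

theorem exists_mul_sub_mul_ne_zero [StarRing K] [Fintype κ] {v v' : κ → K}
    (hv : star v ⬝ᵥ v = 1) (hv' : star v' ⬝ᵥ v' = 1)
    (hne : vecMulVec v (star v) ≠ vecMulVec v' (star v')) :
    ∃ k l, v k * v' l - v l * v' k ≠ 0 := by
  by_contra! hdet
  obtain ⟨k, hk⟩ : ∃ k, v k ≠ 0 :=
    Function.ne_iff.mp (ne_zero_of_star_dotProduct_self_eq_one hv)
  refine hne (vecMulVec_self_star_eq_of_eq_smul hv' hv (c := v' k / v k) ?_).symm
  ext l
  rw [Pi.smul_apply, smul_eq_mul, div_mul_eq_mul_div, eq_div_iff hk]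
  linear_combination hdet k l

-- Cramer's rule for the `2 × 2` minor `hdet` writes both `u` and `u'` as multiples of `w`.
theorem exists_eq_smul_of_add_vecKron_eq_vecKron {u u' w : ι → K} {v v' z : κ → K} {k l : κ}
    (hdet : v k * v' l - v l * v' k ≠ 0) (hu : u ≠ 0)
    (h : vecKron u v + vecKron u' v' = vecKron w z) : ∃ c : K, u' = c • u := by
  have hk i : u i * v k + u' i * v' k = w i * z k := congrFun h (i, k)
  have hl i : u i * v l + u' i * v' l = w i * z l := congrFun h (i, l)
  set D := v k * v' l - v l * v' k
  set A := z k * v' l - z l * v' k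
  set B := v k * z l - v l * z k
  have hA i : u i * D = w i * A := by linear_combination v' l * hk i - v' k * hl i
  have hB i : u' i * D = w i * B := by linear_combination v k * hl i - v l * hk i
  obtain ⟨i₀, hi₀⟩ : ∃ i, u i ≠ 0 := Function.ne_iff.mp hu
  have hA0 : A ≠ 0 := by
    rintro h0
    simpa [h0, hdet, hi₀] using hA i₀
  refine ⟨B / A, funext fun i => ?_⟩
  rw [Pi.smul_apply, smul_eq_mul, div_mul_eq_mul_div, eq_div_iff hA0]
  refine mul_right_cancel₀ hdet ?_
  linear_combination A * hB i - B * hA i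

theorem exists_eq_smul_of_mulVec_vecKron_eq_vecKron [Fintype ι] [Fintype κ]
    {W : Matrix (ι × κ) (ι × κ) K} {φ : ι → K} {ψ ψ' : κ → K} {s : K} {u u' u'' : ι → K}
    {v v' v'' : κ → K} {k l : κ} (hdet : v k * v' l - v l * v' k ≠ 0) (hu : u ≠ 0)
    (hs : s ≠ 0) (hψ : W *ᵥ vecKron φ ψ = vecKron u v) (hψ' : W *ᵥ vecKron φ ψ' = vecKron u' v')
    (hsum : W *ᵥ vecKron φ (s • (ψ + ψ')) = vecKron u'' v'') : ∃ c : K, u' = c • u := by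
  refine exists_eq_smul_of_add_vecKron_eq_vecKron (w := s⁻¹ • u'') (z := v'') hdet hu ?_
  rw [smul_vecKron, ← hsum, ← hψ, ← hψ', vecKron_smul_right, vecKron_add_right, mulVec_smul,
    mulVec_add, inv_smul_smul₀ hs]

end RankOne

theorem sandwich_unitary_independent_general (m n : ℕ)
    (W : Matrix (Fin n × Fin m) (Fin n × Fin m) ℂ)
    (Wfam : (Fin m → ℂ) → Matrix (Fin n) (Fin n) ℂ)
    (hWfam : ∀ ψ : Fin m → ℂ, star ψ ⬝ᵥ ψ = 1 → Wfam ψ ∈ Matrix.unitaryGroup (Fin n) ℂ)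
    (J : Matrix (Fin m) (Fin m) ℂ → Matrix (Fin m) (Fin m) ℂ)
    (hJ : IsStateSymmetry J)
    (h : ∀ (φ : Fin n → ℂ) (ψ : Fin m → ℂ), star φ ⬝ᵥ φ = 1 → star ψ ⬝ᵥ ψ = 1 →
      W * (Matrix.vecMulVec φ (star φ) ⊗ₖ Matrix.vecMulVec ψ (star ψ)) * Wᴴ
        = ((Wfam ψ)ᵀ * Matrix.vecMulVec φ (star φ) * ((Wfam ψ)ᵀ)ᴴ)
            ⊗ₖ J (Matrix.vecMulVec ψ (star ψ))) :
    ∀ ψ ψ' : Fin m → ℂ, star ψ ⬝ᵥ ψ = 1 → star ψ' ⬝ᵥ ψ' = 1 →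
      ∀ φ : Fin n → ℂ, star φ ⬝ᵥ φ = 1 →
        (Wfam ψ)ᵀ * Matrix.vecMulVec φ (star φ) * ((Wfam ψ)ᵀ)ᴴ
          = (Wfam ψ')ᵀ * Matrix.vecMulVec φ (star φ) * ((Wfam ψ')ᵀ)ᴴ := by
  intro ψ ψ' hψ hψ' φ hφ
  have hJ_density {χ : Fin m → ℂ} (hχ : star χ ⬝ᵥ χ = 1) : IsDensity (J (vecMulVec χ (star χ))) :=
    hJ.1.mapsTo (isDensity_vecMulVec_self_star_iff.mpr hχ)
  by_cases hψψ' : vecMulVec ψ (star ψ) = vecMulVec ψ' (star ψ')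
  · have hJ0 : J (vecMulVec ψ' (star ψ')) ≠ 0 := fun h0 => by simpa [h0] using (hJ_density hψ').2
    have hψ_eq := h φ ψ hφ hψ
    rw [hψψ', h φ ψ' hφ hψ'] at hψ_eq
    exact kronecker_right_cancel₀ hJ0 hψ_eq.symm
  have hu {χ : Fin m → ℂ} (hχ : star χ ⬝ᵥ χ = 1) :
      star ((Wfam χ)ᵀ *ᵥ φ) ⬝ᵥ ((Wfam χ)ᵀ *ᵥ φ) = 1 := by
    rw [star_mulVec_dotProduct_mulVec_of_mem_unitaryGroup
      (transpose_mem_unitaryGroup_iff.mpr (hWfam χ hχ)), hφ]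
  have hprod {χ : Fin m → ℂ} (hχ : star χ ⬝ᵥ χ = 1) :=
    exists_mulVec_vecKron_eq_vecKron (ne_zero_of_star_dotProduct_self_eq_one (hu hχ)) (h φ χ hφ hχ)
  obtain ⟨v, hWv, hJv⟩ := hprod hψ
  obtain ⟨v', hWv', hJv'⟩ := hprod hψ'
  have hvv' : vecMulVec v (star v) ≠ vecMulVec v' (star v') := fun hv_eq =>
    hψψ' (hJ.1.injOn (isDensity_vecMulVec_self_star_iff.mpr hψ)
      (isDensity_vecMulVec_self_star_iff.mpr hψ') (by rw [hJv, hJv', hv_eq]))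
  obtain ⟨k, l, hdet⟩ := exists_mul_sub_mul_ne_zero
    (isDensity_vecMulVec_self_star_iff.mp (hJv ▸ hJ_density hψ))
    (isDensity_vecMulVec_self_star_iff.mp (hJv' ▸ hJ_density hψ')) hvv'
  have hsum : ψ + ψ' ≠ 0 := fun h0 => hψψ' (by rw [eq_neg_of_add_eq_zero_left h0]; simp)
  obtain ⟨s, hs⟩ := exists_star_smul_dotProduct_smul_eq_one hsum
  obtain ⟨v'', hWv'', -⟩ := hprod hs
  obtain ⟨c, hc⟩ := exists_eq_smul_of_mulVec_vecKron_eq_vecKron hdet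
    (ne_zero_of_star_dotProduct_self_eq_one (hu hψ))
    (left_ne_zero_of_smul (ne_zero_of_star_dotProduct_self_eq_one hs)) hWv hWv' hWv''
  rw [mul_vecMulVec_mul_conjTranspose, mul_vecMulVec_mul_conjTranspose]
  exact (vecMulVec_self_star_eq_of_eq_smul (hu hψ') (hu hψ) hc).symm

/-- If a unitary `W` on `ℂ^n ⊗ ℂ^m` factorizes on pure product states as
`W(|φ⟩⟨φ| ⊗ |ψ⟩⟨ψ|)W† = (W_ψᵀ |φ⟩⟨φ| (W_ψᵀ)†) ⊗ J(|ψ⟩⟨ψ|)` for a family of unitaries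
`W_ψ` and a state space symmetry `J`, then the conjugation by `W_ψᵀ` is independent
of `ψ`. -/
theorem sandwich_unitary_independent (m n : ℕ)
    (W : Matrix (Fin n × Fin m) (Fin n × Fin m) ℂ)
    (hW : W ∈ Matrix.unitaryGroup (Fin n × Fin m) ℂ)
    (Wfam : (Fin m → ℂ) → Matrix (Fin n) (Fin n) ℂ)
    (hWfam : ∀ ψ : Fin m → ℂ, star ψ ⬝ᵥ ψ = 1 → Wfam ψ ∈ Matrix.unitaryGroup (Fin n) ℂ)
    (J : Matrix (Fin m) (Fin m) ℂ → Matrix (Fin m) (Fin m) ℂ)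
    (hJ : IsStateSymmetry J)
    (h : ∀ (φ : Fin n → ℂ) (ψ : Fin m → ℂ), star φ ⬝ᵥ φ = 1 → star ψ ⬝ᵥ ψ = 1 →
      W * (Matrix.vecMulVec φ (star φ) ⊗ₖ Matrix.vecMulVec ψ (star ψ)) * Wᴴ
        = ((Wfam ψ)ᵀ * Matrix.vecMulVec φ (star φ) * ((Wfam ψ)ᵀ)ᴴ)
            ⊗ₖ J (Matrix.vecMulVec ψ (star ψ))) :
    ∀ ψ ψ' : Fin m → ℂ, star ψ ⬝ᵥ ψ = 1 → star ψ' ⬝ᵥ ψ' = 1 →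
      ∀ φ : Fin n → ℂ, star φ ⬝ᵥ φ = 1 →
        (Wfam ψ)ᵀ * Matrix.vecMulVec φ (star φ) * ((Wfam ψ)ᵀ)ᴴ
          = (Wfam ψ')ᵀ * Matrix.vecMulVec φ (star φ) * ((Wfam ψ')ᵀ)ᴴ :=
  sandwich_unitary_independent_general m n W Wfam hWfam J hJ h
end
end

section
/- Let d ≥ 2. There do not exist unitary matrices W, V ∈ M_d(ℂ) such that for every unitary matrix U ∈ M_d(ℂ) there is a complex number c (depending on U) with W Ū V = c · U†, where Ū denotes the entrywise complex conjugate of U. -/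
open scoped ComplexOrder Kronecker
open Matrix

noncomputable section

/-!
Put `X = U†`, so the hypothesis reads `W Xᵀ V ∈ ℂ · X` for every unitary `X`, with a nonzero
scalar since both sides are unitary. At `X = 1` it gives `V W ∈ ℂ · 1`, so `X ↦ W Xᵀ V` is
multiplicative up to scalars but reverses products: `Y X ∈ ℂˣ · X Y` for all unitaries `X`, `Y`.
The phase gate `diag(1, i)` and the swap of two basis vectors violate this.
-/

namespace Matrix

variable {n α : Type*} [Fintype n] [DecidableEq n] [CommRing α]

theorem diagonal_mem_unitaryGroup [StarRing α] {f : n → α} (hf : ∀ i, f i ∈ unitary α) :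
    diagonal f ∈ unitaryGroup n α := by
  rw [mem_unitaryGroup_iff, star_eq_conjTranspose, diagonal_conjTranspose,
    diagonal_mul_diagonal, ← diagonal_one]
  exact congrArg diagonal (funext fun i => Unitary.mul_star_self_of_mem (hf i))

theorem permMatrix_mem_unitaryGroup [StarRing α] (σ : Equiv.Perm n) :
    σ.permMatrix α ∈ unitaryGroup n α := by
  rw [mem_unitaryGroup_iff, star_eq_conjTranspose, conjTranspose_permMatrix,
    ← permMatrix_mul, inv_mul_cancel, permMatrix_one]

theorem mul_eq_smul_one_comm [StarRing α] {W V : Matrix n n α} {c : α}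
    (hW : W ∈ unitaryGroup n α) (h : W * V = c • 1) : V * W = c • 1 := by
  have hV : V = c • star W := by
    rw [← one_mul V, ← Unitary.star_mul_self_of_mem hW, Matrix.mul_assoc, h, Matrix.mul_smul,
      mul_one]
  rw [hV, Matrix.smul_mul, Unitary.star_mul_self_of_mem hW]

theorem mul_transpose_mul_mul_transpose_mul {W V : Matrix n n α} {c : α}
    (hVW : V * W = c • 1) (A B : Matrix n n α) :
    (W * Bᵀ * V) * (W * Aᵀ * V) = c • (W * (A * B)ᵀ * V) := by
  calc (W * Bᵀ * V) * (W * Aᵀ * V) = W * Bᵀ * (V * W) * Aᵀ * V := by noncomm_ring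
    _ = c • (W * (A * B)ᵀ * V) := by
      rw [hVW, transpose_mul]
      simp only [Matrix.mul_smul, Matrix.smul_mul, Matrix.mul_one, Matrix.mul_assoc]

theorem ne_zero_of_mul_transpose_mul_eq_smul [StarRing α] [Nontrivial α] [Nonempty n]
    {W V X : Matrix n n α} {c : α} (hW : W ∈ unitaryGroup n α) (hV : V ∈ unitaryGroup n α)
    (hX : X ∈ unitaryGroup n α) (h : W * Xᵀ * V = c • X) : c ≠ 0 := by
  have hunit : W * Xᵀ * V ∈ unitaryGroup n α :=
    mul_mem (mul_mem hW (transpose_mem_unitaryGroup_iff.mpr hX)) hV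
  refine left_ne_zero_of_smul (b := X) ?_
  rw [← h]
  exact (Unitary.isUnit_coe (U := ⟨_, hunit⟩)).ne_zero

end Matrix

variable {n : Type*} [Fintype n] [DecidableEq n]

def phaseGate (j : n) : Matrix n n ℂ := diagonal (Function.update 1 j Complex.I)

theorem phaseGate_mem_unitaryGroup (j : n) : phaseGate j ∈ unitaryGroup n ℂ := by
  refine diagonal_mem_unitaryGroup fun k => ?_
  rcases eq_or_ne k j with rfl | hk
  · simp [Unitary.mem_iff, Complex.conj_I]
  · simp [hk]

theorem eq_zero_of_smul_swap_mul_phaseGate {i j : n} (hij : i ≠ j) {a b : ℂ}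
    (h : a • ((Equiv.swap i j).permMatrix ℂ * phaseGate j)
      = b • (phaseGate j * (Equiv.swap i j).permMatrix ℂ)) : a = 0 := by
  -- the `(i, j)` and `(j, i)` entries read `a * I = b` and `a = b * I`, whence `a = -a`
  have h_ij := congrFun (congrFun h i) j
  have h_ji := congrFun (congrFun h j) i
  simp [phaseGate, hij, PEquiv.toMatrix_apply] at h_ij h_ji
  linear_combination (h_ji - Complex.I * h_ij + a * Complex.I_sq) / 2

/-- For `d ≥ 2`, there are no fixed unitaries `W`, `V` with `W Ū V = c·U†` (for some
phase `c` depending on `U`) for every unitary `U`, where `Ū = (U†)ᵀ` is the entrywise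
complex conjugate. -/
theorem no_sandwich_conjugate (d : ℕ) (hd : 2 ≤ d) :
    ¬ ∃ W ∈ Matrix.unitaryGroup (Fin d) ℂ, ∃ V ∈ Matrix.unitaryGroup (Fin d) ℂ,
        ∀ U ∈ Matrix.unitaryGroup (Fin d) ℂ, ∃ c : ℂ, W * (Uᴴ)ᵀ * V = c • Uᴴ := by
  rintro ⟨W, hW, V, hV, h⟩
  have : Nontrivial (Fin d) := Fin.nontrivial_iff_two_le.mpr hd
  have sandwich : ∀ X ∈ unitaryGroup (Fin d) ℂ, ∃ c : ℂ, c ≠ 0 ∧ W * Xᵀ * V = c • X := by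
    intro X hX
    obtain ⟨c, hc⟩ := h (star X) (Unitary.star_mem hX)
    rw [star_eq_conjTranspose, conjTranspose_conjTranspose] at hc
    exact ⟨c, ne_zero_of_mul_transpose_mul_eq_smul hW hV hX hc, hc⟩
  obtain ⟨c₀, -, hc₀⟩ := sandwich 1 (one_mem _)
  rw [transpose_one, Matrix.mul_one] at hc₀
  have hVW := mul_eq_smul_one_comm hW hc₀
  obtain ⟨i, j, hij⟩ := exists_pair_ne (Fin d)
  set S := phaseGate j
  set P := (Equiv.swap i j).permMatrix ℂ
  have hS : S ∈ unitaryGroup (Fin d) ℂ := phaseGate_mem_unitaryGroup j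
  have hP : P ∈ unitaryGroup (Fin d) ℂ := permMatrix_mem_unitaryGroup _
  obtain ⟨cS, hcS, hS'⟩ := sandwich S hS
  obtain ⟨cP, hcP, hP'⟩ := sandwich P hP
  obtain ⟨cSP, -, hSP'⟩ := sandwich (S * P) (mul_mem hS hP)
  have key := mul_transpose_mul_mul_transpose_mul hVW S P
  rw [hS', hP', hSP', smul_smul, Matrix.smul_mul, Matrix.mul_smul, smul_smul] at key
  exact mul_ne_zero hcP hcS (eq_zero_of_smul_swap_mul_phaseGate hij key)
end
end
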